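/- arXiv:2509.24111 — 9 statements merged into one kernel-verified Lean document; each statement's English description precedes it below -/
import Mathlib

section
/- Q ≿ᵢ^SD R holds if and only if for every participant p, the number of elements of R that are weakly preferred (by team i) to p is at most the number of elements of Q that are weakly preferred to p. Equivalently, for every k, the k-th best element of Q (in the order ≿ᵢ) is weakly preferred to the k-th best element of R, and |Q| ≥ |R|. -/
/-- Stochastic dominance via a subset and a preference-respecting bijection. -/
def SDPref {α : Type*} (r : α → α → Prop) (Q R : Finset α) : Prop :=
  ∃ Q' : Finset α, Q' ⊆ Q ∧ Q'.card = R.card ∧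
    ∃ π : α → α, Set.BijOn π ↑Q' ↑R ∧ ∀ p ∈ Q', r p (π p)

/-- A nonempty finset has a minimum for a total transitive relation. -/
lemma exists_min_rel {α : Type*} (r : α → α → Prop)
    (htotal : ∀ a b, r a b ∨ r b a)
    (htrans : ∀ a b c, r a b → r b c → r a c)
    (s : Finset α) (hs : s.Nonempty) : ∃ m ∈ s, ∀ q ∈ s, r q m := by
  classical
  induction s using Finset.induction_on with
  | empty => exact absurd hs (by simp)
  | @insert a s ha ih =>
    rcases s.eq_empty_or_nonempty with rfl | hne
    · refine ⟨a, Finset.mem_insert_self a ∅, fun q hq => ?_⟩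
      simp only [Finset.mem_insert, Finset.notMem_empty, or_false] at hq
      subst hq
      rcases htotal q q with h | h <;> exact h
    · obtain ⟨m, hm, hmin⟩ := ih hne
      rcases htotal a m with h | h
      · refine ⟨m, Finset.mem_insert_of_mem hm, fun q hq => ?_⟩
        rcases Finset.mem_insert.1 hq with rfl | hq
        · exact h
        · exact hmin q hq
      · refine ⟨a, Finset.mem_insert_self a s, fun q hq => ?_⟩
        rcases Finset.mem_insert.1 hq with rfl | hq
        · rcases htotal q q with h' | h' <;> exact h'
        · exact htrans q m a (hmin q hq) h

/-- Counting characterization of stochastic dominance: `Q ≿^SD R` iff for every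
participant `p`, the number of elements of `R` weakly preferred to `p` is at most
the number of elements of `Q` weakly preferred to `p`. -/
theorem SDPref_iff_count {α : Type*} [DecidableEq α] [Fintype α]
    (r : α → α → Prop) [DecidableRel r]
    (htotal : ∀ a b, r a b ∨ r b a)
    (htrans : ∀ a b c, r a b → r b c → r a c)
    (Q R : Finset α) :
    SDPref r Q R ↔
      ∀ p : α, (R.filter fun q => r q p).card ≤ (Q.filter fun q => r q p).card := by
  classical
  constructor
  · rintro ⟨Q', hQ'Q, hcard, π, hbij, hpref⟩ p
    apply Finset.card_le_card_of_surjOn π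
    intro q hq
    simp only [Finset.coe_filter, Set.mem_setOf_eq] at hq
    obtain ⟨x, hx, hxq⟩ := hbij.surjOn hq.1
    refine ⟨x, ?_, hxq⟩
    simp only [Finset.coe_filter, Set.mem_setOf_eq]
    exact ⟨hQ'Q hx, htrans x q p (hxq ▸ hpref x hx) hq.2⟩
  · intro hcount
    rcases R.eq_empty_or_nonempty with rfl | hR
    · exact ⟨∅, by simp, by simp, id, by simp [Set.BijOn], by simp⟩
    have : Nonempty α := ⟨hR.choose⟩
    -- Hall's theorem
    set t : α → Finset α := fun q => if q ∈ R then Q.filter (fun x => r x q) else Finset.univ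
      with ht
    have hall : ∀ s : Finset α, s.card ≤ (s.biUnion t).card := by
      intro s
      rcases s.eq_empty_or_nonempty with rfl | hs
      · simp
      by_cases hsub : s ⊆ R
      · obtain ⟨m, hm, hmin⟩ := exists_min_rel r htotal htrans s hs
        calc s.card ≤ (R.filter fun q => r q m).card := by
              apply Finset.card_le_card
              intro q hq
              exact Finset.mem_filter.2 ⟨hsub hq, hmin q hq⟩
          _ ≤ (Q.filter fun x => r x m).card := hcount m
          _ ≤ (s.biUnion t).card := by
              apply Finset.card_le_card
              intro x hx
              refine Finset.mem_biUnion.2 ⟨m, hm, ?_⟩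
              simp [ht, hsub hm, Finset.mem_filter.1 hx |>.1, Finset.mem_filter.1 hx |>.2]
      · obtain ⟨a, ha, haR⟩ := Finset.not_subset.1 hsub
        calc s.card ≤ Finset.univ.card := Finset.card_le_univ s
          _ ≤ (s.biUnion t).card := by
              apply Finset.card_le_card
              intro x _
              exact Finset.mem_biUnion.2 ⟨a, ha, by simp [ht, haR]⟩
    obtain ⟨f, hfinj, hf⟩ := (Finset.all_card_le_biUnion_card_iff_exists_injective t).1 hall
    have hfR : ∀ q ∈ R, f q ∈ Q ∧ r (f q) q := by
      intro q hq
      have := hf q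
      simp only [ht, if_pos hq, Finset.mem_filter] at this
      exact this
    refine ⟨R.image f, ?_, ?_, Function.invFunOn f ↑R, ?_, ?_⟩
    · intro x hx
      obtain ⟨q, hq, rfl⟩ := Finset.mem_image.1 hx
      exact (hfR q hq).1
    · exact Finset.card_image_of_injective R hfinj
    · have hbij : Set.BijOn f ↑R ↑(R.image f) := by
        rw [Finset.coe_image]
        exact (hfinj.injOn).bijOn_image
      exact hbij.symm hbij.invOn_invFunOn.symm
    · intro x hx
      obtain ⟨q, hq, rfl⟩ := Finset.mem_image.1 hx
      have hbij : Set.BijOn f ↑R ↑(R.image f) := by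
        rw [Finset.coe_image]; exact (hfinj.injOn).bijOn_image
      rw [hbij.invOn_invFunOn.1 hq]
      exact (hfR q hq).2
end

section
/- In any many-to-one matching instance where teams have weak preferences over participants, the allocation produced by the round-robin algorithm (teams pick their most preferred remaining participant in the cyclic order 1, 2, …, n, 1, 2, … until all participants are assigned) satisfies team-SD-EF1: for all distinct teams i, j, there exists X ⊆ A_j with |X| ≤ 1 such that A_i ≿ᵢ^SD (A_j \ X). -/
/-- The round-robin algorithm satisfies team-SD-EF1.
`pick : Fin m ≃ Fin m` records which participant is picked at each step `t`;
the team picking at step `t` is `t % n` (cyclic order `1, 2, …, n, 1, 2, …`);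
`hgreedy` says each picked participant is most preferred by the picking team
among the participants not yet assigned; `A i` is the set of participants
picked on team `i`'s turns. Then for all distinct teams `i, j` there is
`X ⊆ A j` with `|X| ≤ 1` and `A i ≿ᵢ^SD (A j \ X)`. -/
theorem roundRobin_teamSDEF1 (n m : ℕ) (hn : 0 < n)
    (pref : Fin n → Fin m → Fin m → Prop)
    (htotal : ∀ i a b, pref i a b ∨ pref i b a)
    (htrans : ∀ i a b c, pref i a b → pref i b c → pref i a c)
    (pick : Fin m ≃ Fin m)
    (hgreedy : ∀ t : Fin m, ∀ q : Fin m,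
      (∀ s : Fin m, s < t → pick s ≠ q) →
      pref ⟨t.val % n, Nat.mod_lt _ hn⟩ (pick t) q)
    (A : Fin n → Finset (Fin m))
    (hA : ∀ (q : Fin m) (i : Fin n),
      q ∈ A i ↔ ∃ t : Fin m, pick t = q ∧ t.val % n = i.val) :
    ∀ i j : Fin n, i ≠ j →
      ∃ X ⊆ A j, X.card ≤ 1 ∧ SDPref (pref i) (A i) (A j \ X) := by
  intro i j hij
  have hmem : ∀ (q : Fin m) (k : Fin n),
      q ∈ A k ↔ (pick.symm q).val % n = k.val := by
    intro q k
    rw [hA]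
    constructor
    · rintro ⟨t, rfl, ht⟩
      simpa using ht
    · intro h
      exact ⟨pick.symm q, pick.apply_symm_apply q, h⟩
  rcases Nat.eq_zero_or_pos m with hm | hm
  · have hempty : A j = ∅ :=
      Finset.eq_empty_of_forall_notMem (fun q _ => absurd q.isLt (by omega))
    refine ⟨∅, Finset.empty_subset _, by simp, ∅, Finset.empty_subset _,
      by simp [hempty], id, ?_, by simp⟩
    simp [hempty]
  · -- X: team j's first-round pick (if any)
    set X : Finset (Fin m) := (A j).filter (fun q => (pick.symm q).val < n) with hXdef
    have hXsub : X ⊆ A j := Finset.filter_subset _ _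
    have hXcard : X.card ≤ 1 := by
      refine Finset.card_le_one.2 (fun a ha b hb => ?_)
      simp only [hXdef, Finset.mem_filter] at ha hb
      have ha2 := (hmem a j).1 ha.1
      have hb2 := (hmem b j).1 hb.1
      have h1 : (pick.symm a).val = j.val := by rw [← Nat.mod_eq_of_lt ha.2]; exact ha2
      have h2 : (pick.symm b).val = j.val := by rw [← Nat.mod_eq_of_lt hb.2]; exact hb2
      exact pick.symm.injective (Fin.ext (h1.trans h2.symm))
    -- forward and backward maps between steps
    set σ : Fin m → Fin m := fun q =>
      pick ⟨(pick.symm q).val + i.val - n - j.val, by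
        have h1 := (pick.symm q).isLt
        have h2 := i.isLt
        omega⟩ with hσdef
    set π : Fin m → Fin m := fun p =>
      pick ⟨((pick.symm p).val + n + j.val - i.val) % m, Nat.mod_lt _ hm⟩ with hπdef
    have main : ∀ q ∈ A j \ X, π (σ q) = q ∧ σ q ∈ A i ∧ pref i (σ q) q := by
      intro q hq
      rw [Finset.mem_sdiff] at hq
      obtain ⟨hqA, hqX⟩ := hq
      have hs_mod : (pick.symm q).val % n = j.val := (hmem q j).1 hqA
      have hs_ge : n ≤ (pick.symm q).val := by
        by_contra h
        exact hqX (Finset.mem_filter.2 ⟨hqA, by omega⟩)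
      have hs_lt : (pick.symm q).val < m := (pick.symm q).isLt
      set s := (pick.symm q).val with hs
      -- s ≥ n + j
      have hdm := Nat.div_add_mod s n
      rw [hs_mod] at hdm
      have hd1 : 1 ≤ s / n := (Nat.one_le_div_iff hn).2 hs_ge
      have h5 : n * (s / n - 1) + n = n * (s / n) := by
        have h6 : (s / n - 1) + 1 = s / n := by omega
        calc n * (s / n - 1) + n = n * ((s / n - 1) + 1) := by ring
          _ = n * (s / n) := by rw [h6]
      have hnj : n + j.val ≤ s := by
        have hP : 0 ≤ n * (s / n - 1) := Nat.zero_le _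
        omega
      have hiLt : i.val < n := i.isLt
      -- t and its properties
      have ht_eq : s + i.val - n - j.val = i.val + n * (s / n - 1) := by omega
      have htm : s + i.val - n - j.val < m := by omega
      have htmod : (s + i.val - n - j.val) % n = i.val := by
        rw [ht_eq, Nat.add_mul_mod_self_left, Nat.mod_eq_of_lt hiLt]
      have hσq : σ q = pick ⟨s + i.val - n - j.val, htm⟩ := rfl
      have hsymmσ : (pick.symm (σ q)).val = s + i.val - n - j.val := by
        rw [hσq, Equiv.symm_apply_apply]
      refine ⟨?_, ?_, ?_⟩
      · -- π (σ q) = q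
        have hfin : (⟨((pick.symm (σ q)).val + n + j.val - i.val) % m,
            Nat.mod_lt _ hm⟩ : Fin m) = pick.symm q := by
          apply Fin.ext
          rw [hsymmσ]
          have h7 : s + i.val - n - j.val + n + j.val - i.val = s := by omega
          rw [h7]
          show s % m = (pick.symm q).val
          rw [Nat.mod_eq_of_lt hs_lt]
        have h8 : π (σ q) = pick (pick.symm q) := congrArg pick hfin
        rw [h8, Equiv.apply_symm_apply]
      · -- σ q ∈ A i
        rw [hmem, hsymmσ, htmod]
      · -- preference
        have hnotpicked : ∀ s' : Fin m, s' < ⟨s + i.val - n - j.val, htm⟩ → pick s' ≠ q := by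
          intro s' hs' hcontra
          have h1 : s' = pick.symm q := by rw [← hcontra, Equiv.symm_apply_apply]
          have h2 : s'.val < s + i.val - n - j.val := hs'
          rw [h1, ← hs] at h2
          omega
        have hg := hgreedy ⟨s + i.val - n - j.val, htm⟩ q hnotpicked
        have hteam : (⟨(⟨s + i.val - n - j.val, htm⟩ : Fin m).val % n, Nat.mod_lt _ hn⟩ : Fin n) = i :=
          Fin.ext htmod
        rw [hteam] at hg
        rw [hσq]
        exact hg
    refine ⟨X, hXsub, hXcard, (A j \ X).image σ, ?_, ?_, π, ⟨?_, ?_, ?_⟩, ?_⟩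
    · intro p hp
      obtain ⟨q, hq, rfl⟩ := Finset.mem_image.1 hp
      exact (main q hq).2.1
    · refine Finset.card_image_of_injOn (fun q1 h1 q2 h2 heq => ?_)
      have := congrArg π heq
      rwa [(main q1 h1).1, (main q2 h2).1] at this
    · -- MapsTo
      intro p hp
      simp only [Finset.coe_image, Set.mem_image, Finset.mem_coe] at hp
      obtain ⟨q, hq, rfl⟩ := hp
      rw [(main q hq).1]
      exact hq
    · -- InjOn
      intro p1 h1 p2 h2 heq
      simp only [Finset.coe_image, Set.mem_image, Finset.mem_coe] at h1 h2
      obtain ⟨q1, hq1, rfl⟩ := h1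
      obtain ⟨q2, hq2, rfl⟩ := h2
      rw [(main q1 hq1).1, (main q2 hq2).1] at heq
      rw [heq]
    · -- SurjOn
      intro q hq
      simp only [Finset.mem_coe] at hq
      refine ⟨σ q, ?_, (main q hq).1⟩
      simp only [Finset.coe_image, Set.mem_image, Finset.mem_coe]
      exact ⟨q, hq, rfl⟩
    · intro p hp
      obtain ⟨q, hq, rfl⟩ := Finset.mem_image.1 hp
      rw [(main q hq).1]
      exact (main q hq).2.2
end

section
/- Team-SD-EF1 implies team-justified SD-EF1: if an allocation A satisfies that for all distinct teams i, j there exists X ⊆ A_j with |X| ≤ 1 and A_i ≿ᵢ^SD (A_j \ X), then A also satisfies team-justified SD-EF1, i.e., for all distinct i, j there exists X ⊆ B_j with |X| ≤ 1 and A_i ≿ᵢ^SD (B_j \ X), where B_j ⊆ A_j is the set of participants in A_j who weakly prefer team i to team j. -/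
lemma SDPref_subset_right {α : Type*} [DecidableEq α] {r : α → α → Prop} {Q R S : Finset α}
    (h : SDPref r Q R) (hS : S ⊆ R) : SDPref r Q S := by
  classical
  obtain ⟨Q', hQ', hcard, π, hbij, hr⟩ := h
  set Q'' := Q'.filter (fun p => π p ∈ S) with hQ''def
  have hsub : Q'' ⊆ Q' := Finset.filter_subset _ _
  have himg : Q''.image π = S := by
    apply Finset.Subset.antisymm
    · intro s hs
      obtain ⟨p, hp, rfl⟩ := Finset.mem_image.mp hs
      exact (Finset.mem_filter.mp hp).2
    · intro s hs
      obtain ⟨p, hp, rfl⟩ := hbij.surjOn (by exact_mod_cast hS hs)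
      exact Finset.mem_image.mpr ⟨p, Finset.mem_filter.mpr ⟨by exact_mod_cast hp, hs⟩, rfl⟩
  have hinj : Set.InjOn π ↑Q'' := hbij.injOn.mono (by exact_mod_cast hsub)
  refine ⟨Q'', hsub.trans hQ', ?_, π, ⟨?_, hinj, ?_⟩, fun p hp => hr p (hsub hp)⟩
  · rw [← himg, Finset.card_image_of_injOn hinj]
  · intro p hp
    have : p ∈ Q'' := by exact_mod_cast hp
    exact_mod_cast (Finset.mem_filter.mp this).2
  · intro s hs
    have : s ∈ S := by exact_mod_cast hs
    rw [← himg] at this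
    obtain ⟨p, hp, rfl⟩ := Finset.mem_image.mp this
    exact ⟨p, by exact_mod_cast hp, rfl⟩

/-- Team-SD-EF1 implies team-justified SD-EF1.
`tpref i` is team `i`'s weak (total, transitive) preference over participants,
`ppref p` is participant `p`'s weak preference over teams,
`A i` is team `i`'s bundle, and `B i j ⊆ A j` is the set of participants in `A j`
who weakly prefer team `i` to team `j`. -/
theorem teamSDEF1_implies_teamJustifiedSDEF1 {ι α : Type*} [DecidableEq α]
    (tpref : ι → α → α → Prop)
    (ppref : α → ι → ι → Prop)
    (httotal : ∀ i a b, tpref i a b ∨ tpref i b a)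
    (httrans : ∀ i a b c, tpref i a b → tpref i b c → tpref i a c)
    (A : ι → Finset α)
    (B : ι → ι → Finset α)
    (hB : ∀ i j p, p ∈ B i j ↔ p ∈ A j ∧ ppref p i j)
    (hEF1 : ∀ i j, i ≠ j → ∃ X ⊆ A j, X.card ≤ 1 ∧ SDPref (tpref i) (A i) (A j \ X)) :
    ∀ i j, i ≠ j → ∃ X ⊆ B i j, X.card ≤ 1 ∧ SDPref (tpref i) (A i) (B i j \ X) := by
  intro i j hij
  obtain ⟨X, hX, hXcard, hSD⟩ := hEF1 i j hij
  have hBA : B i j ⊆ A j := fun p hp => ((hB i j p).mp hp).1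
  refine ⟨X ∩ B i j, Finset.inter_subset_right, le_trans (Finset.card_le_card Finset.inter_subset_left) hXcard, ?_⟩
  have heq : B i j \ (X ∩ B i j) = B i j \ X := by
    ext p; simp [Finset.mem_sdiff]
  rw [heq]
  exact SDPref_subset_right hSD (fun p hp => by
    rw [Finset.mem_sdiff] at hp ⊢
    exact ⟨hBA hp.1, hp.2⟩)
end

section
/- Monotonicity of SD-EF1 under taking subsets of the envied bundle: if Q ≿ᵢ^SD (R \ X) for some X ⊆ R with |X| ≤ 1, then for any subset R' ⊆ R there exists X' ⊆ R' with |X'| ≤ 1 such that Q ≿ᵢ^SD (R' \ X'). -/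
/-- SDPref is antitone in the second argument. -/
lemma SDPref_mono_right {α : Type*} [DecidableEq α] (r : α → α → Prop)
    {Q R S : Finset α} (hS : S ⊆ R) (h : SDPref r Q R) : SDPref r Q S := by
  obtain ⟨Q', hQ'Q, hcard, π, hbij, hpref⟩ := h
  refine ⟨Q'.filter (fun p => π p ∈ S), (Finset.filter_subset _ _).trans hQ'Q, ?_, π, ?_, ?_⟩
  · apply Finset.card_bij (fun p _ => π p)
    · intro p hp
      exact (Finset.mem_filter.mp hp).2
    · intro p hp q hq hpq
      exact hbij.injOn (Finset.mem_filter.mp hp).1 (Finset.mem_filter.mp hq).1 hpq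
    · intro s hs
      obtain ⟨p, hp, hps⟩ := hbij.surjOn (hS hs)
      exact ⟨p, Finset.mem_filter.mpr ⟨hp, hps ▸ hs⟩, hps⟩
  · refine ⟨?_, ?_, ?_⟩
    · intro p hp
      have := Finset.mem_coe.mp hp
      exact Finset.mem_coe.mpr (Finset.mem_filter.mp this).2
    · exact hbij.injOn.mono (by intro p hp; exact (Finset.mem_filter.mp hp).1)
    · intro s hs
      obtain ⟨p, hp, hps⟩ := hbij.surjOn (hS hs)
      exact ⟨p, Finset.mem_coe.mpr (Finset.mem_filter.mpr ⟨hp, hps ▸ hs⟩), hps⟩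
  · intro p hp
    exact hpref p (Finset.mem_filter.mp hp).1

/-- Monotonicity of SD-EF1 under taking subsets of the envied bundle:
if `Q ≿^SD (R \ X)` for some `X ⊆ R` with `|X| ≤ 1`, then for any `R' ⊆ R`
there is `X' ⊆ R'` with `|X'| ≤ 1` and `Q ≿^SD (R' \ X')`. -/
theorem SDEF1_subset_mono {α : Type*} [DecidableEq α] (r : α → α → Prop)
    (htotal : ∀ a b, r a b ∨ r b a)
    (htrans : ∀ a b c, r a b → r b c → r a c)
    (Q R R' : Finset α) (hR' : R' ⊆ R)
    (h : ∃ X ⊆ R, X.card ≤ 1 ∧ SDPref r Q (R \ X)) :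
    ∃ X' ⊆ R', X'.card ≤ 1 ∧ SDPref r Q (R' \ X') := by
  obtain ⟨X, hXR, hX1, hSD⟩ := h
  refine ⟨X ∩ R', Finset.inter_subset_right, le_trans (Finset.card_le_card Finset.inter_subset_left) hX1, ?_⟩
  apply SDPref_mono_right r ?_ hSD
  intro p hp
  rw [Finset.mem_sdiff] at hp ⊢
  rw [Finset.mem_inter] at hp
  exact ⟨hR' hp.1, fun hx => hp.2 ⟨hx, hp.1⟩⟩
end

section
/- In the auxiliary one-to-one instance with strict preferences constructed in Algorithm 2 (team-slots with interleaved participant preferences), any participant-justified-EF matching yields, upon merging slots back into teams, an allocation that is participant-justified EF in the original instance: if p ∈ A_i, p' ∈ A_j with j ≻_p i, then p ⊁_j p' (team j does not strictly prefer p to p'). -/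
/-- Merging a participant-justified-EF matching of the auxiliary one-to-one instance
back into teams yields a participant-justified-EF allocation of the original instance.

`team x` is the team owning slot `x`; `pStrict p i j` means participant `p` strictly
prefers team `i` to team `j`; `tStrict i a b` means team `i` strictly prefers
participant `a` to participant `b`; `slotPref p x y` is `p`'s strict preference over
slots, and `sPref x a b` is slot `x`'s strict preference over participants.
The hypotheses encode the construction of the auxiliary instance: a participant who
strictly prefers team `i` to team `j` prefers every slot of `i` to every slot of `j`,
and each slot's strict preference refines its team's weak preference.
`S` is a perfect matching of participants to slots that is participant-justified EF
in the auxiliary instance.  Conclusion: in the induced allocation, if `p` is assigned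
to team `i` and `p'` to team `j` with `j ≻_p i`, then team `j` does not strictly
prefer `p` to `p'`. -/
theorem auxiliary_merge_PJEF {ι σ α : Type*}
    (team : σ → ι)
    (pStrict : α → ι → ι → Prop)
    (tStrict : ι → α → α → Prop)
    (slotPref : α → σ → σ → Prop)
    (sPref : σ → α → α → Prop)
    (hslot : ∀ (p : α) (x y : σ), pStrict p (team x) (team y) → slotPref p x y)
    (hrefine : ∀ (x : σ) (a b : α), tStrict (team x) a b → sPref x a b)
    (S : α ≃ σ)
    (hJEF : ∀ (p : α) (x : σ), slotPref p x (S p) → ¬ sPref x p (S.symm x)) :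
    ∀ p p' : α, pStrict p (team (S p')) (team (S p)) →
      ¬ tStrict (team (S p')) p p' := by
  intro p p' hp ht
  exact hJEF p (S p') (hslot p (S p') (S p) hp)
    (by simpa using hrefine (S p') p p' ht)
end

section
/- Monotonicity of slot values in the main algorithm: over the iterations of the while-loop of Algorithm 3, each team-slot's value for its matched participant is weakly non-decreasing (where an unmatched slot has value −∞). Formally, if S is the lexicographically optimal eligible matching for eligibility sets {E_j} and S' is the lexicographically optimal eligible matching for pointwise larger eligibility sets {E'_j} with E_j ⊆ E'_j for all j, then for every slot x, the value x receives in S' is at least the value it receives in S. -/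
/-- A partial matching from the slot side, matching each participant to at most one
slot and only to slots of teams in the participant's eligibility set. -/
def IsEligibleMatching {P ι : Type*} {m : ℕ} (team : Fin m → ι) (E : P → Set ι)
    (M : Fin m → Option P) : Prop :=
  (∀ x y p, M x = some p → M y = some p → x = y) ∧
  (∀ x p, M x = some p → team x ∈ E p)

/-- The value a slot receives in a matching; an unmatched slot receives `⊥ = -∞`. -/
def slotVal {P : Type*} {m : ℕ} (v : Fin m → P → ℝ) (M : Fin m → Option P)
    (x : Fin m) : WithBot ℝ :=
  match M x with
  | none => ⊥
  | some p => (v x p : WithBot ℝ)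

/-- `M` is lexicographically optimal (for the slot values, in the fixed priority
order of slots, unmatched slots valued `-∞`) among matchings eligible for `E`. -/
def LexOptimal {P ι : Type*} {m : ℕ} (team : Fin m → ι) (E : P → Set ι)
    (v : Fin m → P → ℝ) (M : Fin m → Option P) : Prop :=
  IsEligibleMatching team E M ∧
  ∀ M' : Fin m → Option P, IsEligibleMatching team E M' →
    ¬ ∃ x : Fin m, (∀ y : Fin m, y < x → slotVal v M' y = slotVal v M y) ∧
      slotVal v M x < slotVal v M' x

/-- The set of slots reachable from `x` along the alternating chain: from a slot `y`
in the chain whose `S`-participant `p` is matched by `S'` at `w`, move to `w`. -/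
inductive Chain {P : Type*} {m : ℕ} (S S' : Fin m → Option P) (x : Fin m) : Fin m → Prop
  | base : Chain S S' x x
  | step (y w : Fin m) (p : P) : Chain S S' x y → S y = some p → S' w = some p →
      Chain S S' x w

theorem slotVal_congr {P : Type*} {m : ℕ} (v : Fin m → P → ℝ)
    (M N : Fin m → Option P) (x : Fin m) (h : M x = N x) :
    slotVal v M x = slotVal v N x := by
  unfold slotVal; rw [h]

/-- Monotonicity of slot values in the main algorithm: if `S` is a lexicographically
optimal eligible matching for eligibility sets `E` and `S'` for pointwise larger
eligibility sets `E'` (with the eligibility set of every participant matched in `S`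
unchanged), then every slot receives in `S'` a value at least its value in `S`. -/
theorem slotVal_mono {P ι : Type*} {m : ℕ}
    (team : Fin m → ι) (v : Fin m → P → ℝ)
    (E E' : P → Set ι) (hmono : ∀ p, E p ⊆ E' p)
    (S S' : Fin m → Option P)
    (hS : LexOptimal team E v S)
    (hS' : LexOptimal team E' v S')
    (hmatched : ∀ (x : Fin m) (p : P), S x = some p → E' p = E p) :
    ∀ x : Fin m, slotVal v S x ≤ slotVal v S' x := by
  classical
  intro x
  by_contra hle
  push_neg at hle
  -- hle : slotVal v S' x < slotVal v S x
  set caseB : Prop := ∃ p w, S' x = some p ∧ Chain S S' x w ∧ S w = some p with hcB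
  set M' : Fin m → Option P := fun y => if Chain S S' x y then S y else S' y with hM'
  set M'' : Fin m → Option P := fun y =>
    if Chain S S' x y then (if y = x ∧ ¬caseB then none else S' y) else S y with hM''
  -- basic computation lemmas
  have hM'in : ∀ y, Chain S S' x y → M' y = S y := fun y h => if_pos h
  have hM'out : ∀ y, ¬Chain S S' x y → M' y = S' y := fun y h => if_neg h
  have hM''out : ∀ y, ¬Chain S S' x y → M'' y = S y := fun y h => if_neg h
  have hM''in : ∀ y, Chain S S' x y → y ≠ x → M'' y = S' y := by
    intro y h hne
    show (if Chain S S' x y then (if y = x ∧ ¬caseB then none else S' y) else S y) = S' y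
    rw [if_pos h, if_neg (by tauto)]
  have hM''some : ∀ a p, M'' a = some p →
      (Chain S S' x a ∧ S' a = some p ∧ ¬(a = x ∧ ¬caseB)) ∨
      (¬Chain S S' x a ∧ S a = some p) := by
    intro a p ha
    by_cases hc : Chain S S' x a
    · left
      have ha' : (if Chain S S' x a then (if a = x ∧ ¬caseB then none else S' a)
          else S a) = some p := ha
      rw [if_pos hc] at ha'
      by_cases hx : a = x ∧ ¬caseB
      · rw [if_pos hx] at ha'; exact absurd ha' (by simp)
      · rw [if_neg hx] at ha'; exact ⟨hc, ha', hx⟩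
    · right; exact ⟨hc, (hM''out a hc) ▸ ha⟩
  -- key structural lemma: any chain slot matched by S' to p (other than the excluded
  -- case) has p matched somewhere in S
  have key : ∀ a p, Chain S S' x a → S' a = some p → ¬(a = x ∧ ¬caseB) →
      ∃ w, Chain S S' x w ∧ S w = some p := by
    intro a p ha hS'a hnot
    cases ha with
    | base =>
      have hB : caseB := by tauto
      obtain ⟨p', w, h1, h2, h3⟩ := hB
      rw [hS'a] at h1
      obtain rfl : p = p' := by injection h1
      exact ⟨w, h2, h3⟩
    | step y w q hy hSy hS'w =>
      rw [hS'a] at hS'w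
      obtain rfl : p = q := by injection hS'w
      exact ⟨y, hy, hSy⟩
  -- M' is an eligible matching for E'
  have hM'elig : IsEligibleMatching team E' M' := by
    constructor
    · intro a b p ha hb
      by_cases hca : Chain S S' x a <;> by_cases hcb : Chain S S' x b
      · exact hS.1.1 a b p ((hM'in a hca) ▸ ha) ((hM'in b hcb) ▸ hb)
      · exact absurd (Chain.step a b p hca ((hM'in a hca) ▸ ha) ((hM'out b hcb) ▸ hb)) hcb
      · exact absurd (Chain.step b a p hcb ((hM'in b hcb) ▸ hb) ((hM'out a hca) ▸ ha)) hca
      · exact hS'.1.1 a b p ((hM'out a hca) ▸ ha) ((hM'out b hcb) ▸ hb)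
    · intro a p ha
      by_cases hca : Chain S S' x a
      · exact hmono p (hS.1.2 a p ((hM'in a hca) ▸ ha))
      · exact hS'.1.2 a p ((hM'out a hca) ▸ ha)
  -- M'' is an eligible matching for E
  have hM''elig : IsEligibleMatching team E M'' := by
    constructor
    · intro a b p ha hb
      rcases hM''some a p ha with ⟨hca, hS'a, hna⟩ | ⟨hca, hSa⟩ <;>
        rcases hM''some b p hb with ⟨hcb, hS'b, hnb⟩ | ⟨hcb, hSb⟩
      · exact hS'.1.1 a b p hS'a hS'b
      · obtain ⟨w, hw, hSw⟩ := key a p hca hS'a hna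
        exact absurd ((hS.1.1 w b p hSw hSb) ▸ hw) hcb
      · obtain ⟨w, hw, hSw⟩ := key b p hcb hS'b hnb
        exact absurd ((hS.1.1 w a p hSw hSa) ▸ hw) hca
      · exact hS.1.1 a b p hSa hSb
    · intro a p ha
      rcases hM''some a p ha with ⟨hca, hS'a, hna⟩ | ⟨hca, hSa⟩
      · obtain ⟨w, hw, hSw⟩ := key a p hca hS'a hna
        exact (hmatched w p hSw) ▸ (hS'.1.2 a p hS'a)
      · exact hS.1.2 a p hSa
  -- the finset of chain slots where the two values differ
  set T : Finset (Fin m) :=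
    Finset.univ.filter (fun y => Chain S S' x y ∧ slotVal v S y ≠ slotVal v S' y) with hT
  have hxT : x ∈ T := by
    rw [hT, Finset.mem_filter]
    exact ⟨Finset.mem_univ x, Chain.base, (ne_of_lt hle).symm⟩
  set z : Fin m := T.min' ⟨x, hxT⟩ with hz
  have hzmem : z ∈ T := T.min'_mem ⟨x, hxT⟩
  obtain ⟨-, hzC, hzne⟩ := Finset.mem_filter.mp hzmem
  have hzx : z ≤ x := T.min'_le x hxT
  have hlow : ∀ y, y < z → Chain S S' x y → slotVal v S y = slotVal v S' y := by
    intro y hy hcy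
    by_contra hne
    have : y ∈ T := Finset.mem_filter.mpr ⟨Finset.mem_univ y, hcy, hne⟩
    exact absurd (T.min'_le y this) (not_le_of_gt hy)
  rcases hzne.lt_or_gt with h1 | h1
  · -- slotVal v S z < slotVal v S' z : contradict optimality of S using M''
    have hznx : z ≠ x := by
      intro h
      rw [h] at h1
      exact absurd h1 (not_lt_of_gt hle)
    refine hS.2 M'' hM''elig ⟨z, ?_, ?_⟩
    · intro y hy
      by_cases hcy : Chain S S' x y
      · have hynx : y ≠ x := fun h => absurd (h ▸ hy) (not_lt_of_ge hzx)
        rw [slotVal_congr v M'' S' y (hM''in y hcy hynx)]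
        exact (hlow y hy hcy).symm
      · exact slotVal_congr v M'' S y (hM''out y hcy)
    · rw [slotVal_congr v M'' S' z (hM''in z hzC hznx)]
      exact h1
  · -- slotVal v S' z < slotVal v S z : contradict optimality of S' using M'
    refine hS'.2 M' hM'elig ⟨z, ?_, ?_⟩
    · intro y hy
      by_cases hcy : Chain S S' x y
      · rw [slotVal_congr v M' S y (hM'in y hcy)]
        exact hlow y hy hcy
      · exact slotVal_congr v M' S' y (hM'out y hcy)
    · rw [slotVal_congr v M' S z (hM'in z hzC)]
      exact h1
end

section
/- A participant-justified EF allocation is Pareto optimal if and only if it admits no Pareto improvement cycle (Erdil–Ergin characterization): i.e., a participant-justified EF allocation A fails PO exactly when there exist participants p_{j_0}, p_{j_1}, …, p_{j_{k−1}}, k ≥ 2, assigned to teams t_0, …, t_{k−1}, such that for each t (indices mod k) participant p_{j_t} weakly prefers team t_{t+1} to team t_t and team t_{t+1} weakly prefers p_{j_t} to p_{j_{t+1}}, with at least one of these preferences strict. -/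
open Finset

namespace Stmt16

variable {ι α : Type*} [Fintype α] [DecidableEq ι]

/-- The bundle of team `i` under assignment `A`. -/
def bundle (A : α → ι) (i : ι) : Finset α := Finset.univ.filter fun p => A p = i

/-- Participant-justified envy-freeness: no `p ∈ A_i`, `p' ∈ A_j`
with `j ≻_p i` and `p ≻_j p'`. -/
def PJEF (tpref : ι → α → α → Prop) (ppref : α → ι → ι → Prop) (A : α → ι) : Prop :=
  ¬ ∃ p p' : α, (ppref p (A p') (A p) ∧ ¬ ppref p (A p) (A p')) ∧
    (tpref (A p') p p' ∧ ¬ tpref (A p') p' p)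

/-- `A'` Pareto dominates `A` (among allocations with the same bundle sizes):
every team is weakly better off under SD, every participant weakly better off,
and some team or participant is strictly better off. -/
def Dominates (tpref : ι → α → α → Prop) (ppref : α → ι → ι → Prop)
    (A' A : α → ι) : Prop :=
  (∀ i, (bundle A' i).card = (bundle A i).card) ∧
  (∀ i, SDPref (tpref i) (bundle A' i) (bundle A i)) ∧
  (∀ p, ppref p (A' p) (A p)) ∧
  ((∃ i, ¬ SDPref (tpref i) (bundle A i) (bundle A' i)) ∨
   (∃ p, ¬ ppref p (A p) (A' p)))

/-- Pareto optimality. -/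
def PO (tpref : ι → α → α → Prop) (ppref : α → ι → ι → Prop) (A : α → ι) : Prop :=
  ¬ ∃ A' : α → ι, Dominates tpref ppref A' A

/-- A Pareto improvement cycle: distinct participants `p 0, …, p (k-1)`, `k ≥ 2`,
where each `p t` weakly prefers the team of `p (t+1)` to its own and the team of
`p (t+1)` weakly prefers `p t` to `p (t+1)`, with at least one preference strict. -/
def ParetoImprovementCycle (tpref : ι → α → α → Prop) (ppref : α → ι → ι → Prop)
    (A : α → ι) : Prop :=
  ∃ k : ℕ, 2 ≤ k ∧ ∃ p : ℕ → α,
    (∀ t t', t < k → t' < k → p t = p t' → t = t') ∧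
    (∀ t, t < k → ppref (p t) (A (p ((t + 1) % k))) (A (p t)) ∧
      tpref (A (p ((t + 1) % k))) (p t) (p ((t + 1) % k))) ∧
    (∃ t, t < k ∧
      ((ppref (p t) (A (p ((t + 1) % k))) (A (p t)) ∧
        ¬ ppref (p t) (A (p t)) (A (p ((t + 1) % k)))) ∨
       (tpref (A (p ((t + 1) % k))) (p t) (p ((t + 1) % k)) ∧
        ¬ tpref (A (p ((t + 1) % k))) (p ((t + 1) % k)) (p t))))

section Aux
variable {β : Type*}

lemma iter_mem {S : Set β} {f : β → β}
    (hmaps : ∀ q ∈ S, f q ∈ S) {q : β} (hq : q ∈ S) : ∀ n, f^[n] q ∈ S := by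
  intro n
  induction n with
  | zero => simpa using hq
  | succ n ih => rw [Function.iterate_succ_apply']; exact hmaps _ ih

lemma exists_iterate_fixed [Finite β] {S : Set β} {f : β → β}
    (hmaps : ∀ q ∈ S, f q ∈ S) (hinj : Set.InjOn f S) {q : β} (hq : q ∈ S) :
    ∃ d, 0 < d ∧ f^[d] q = q := by
  obtain ⟨m, n, hmn, h⟩ := Finite.exists_ne_map_eq_of_infinite (fun n => f^[n] q)
  rcases Nat.lt_or_ge m n with hlt | hge
  · refine ⟨n - m, by omega, ?_⟩
    have hinjm : Set.InjOn (f^[m]) S := hinj.iterate (fun x hx => hmaps x hx) m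
    apply hinjm (iter_mem hmaps hq _) hq
    rw [← Function.iterate_add_apply, show m + (n - m) = n by omega]
    exact h.symm
  · have hlt : n < m := by omega
    refine ⟨m - n, by omega, ?_⟩
    have hinjm : Set.InjOn (f^[n]) S := hinj.iterate (fun x hx => hmaps x hx) n
    apply hinjm (iter_mem hmaps hq _) hq
    rw [← Function.iterate_add_apply, show n + (m - n) = m by omega]
    exact h

lemma orbit_back [Finite β] {r : β → β → Prop}
    (htrans : ∀ a b c, r a b → r b c → r a c) (hrefl : ∀ a, r a a)
    {S : Set β} {f : β → β} (hmaps : ∀ q ∈ S, f q ∈ S)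
    (hinj : Set.InjOn f S) (hr : ∀ q ∈ S, r q (f q)) :
    ∀ q ∈ S, r (f q) q := by
  intro q hq
  obtain ⟨d, hd, hfix⟩ := exists_iterate_fixed hmaps hinj hq
  have chain : ∀ j, 1 ≤ j → r (f q) (f^[j] q) := by
    intro j hj
    induction j with
    | zero => omega
    | succ j ih =>
      rcases Nat.eq_zero_or_pos j with h0 | h0
      · subst h0; simpa using hrefl (f q)
      · rw [Function.iterate_succ_apply']
        exact htrans _ _ _ (ih h0) (hr _ (iter_mem hmaps hq j))
  have := chain d hd
  rwa [hfix] at this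

lemma mod_succ_inj {k t t' : ℕ} (ht : t < k) (ht' : t' < k)
    (h : (t + 1) % k = (t' + 1) % k) : t = t' := by
  rcases Nat.lt_or_ge (t + 1) k with h1 | h1
  · rw [Nat.mod_eq_of_lt h1] at h
    rcases Nat.lt_or_ge (t' + 1) k with h2 | h2
    · rw [Nat.mod_eq_of_lt h2] at h; omega
    · rw [show t' + 1 = k by omega, Nat.mod_self] at h; omega
  · rw [show t + 1 = k by omega, Nat.mod_self] at h
    rcases Nat.lt_or_ge (t' + 1) k with h2 | h2
    · rw [Nat.mod_eq_of_lt h2] at h; omega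
    · omega

end Aux

lemma mem_bundle {A : α → ι} {i : ι} {q : α} : q ∈ bundle A i ↔ A q = i := by
  simp [bundle]

/-- Erdil–Ergin characterization: a participant-justified EF allocation is Pareto
optimal iff it admits no Pareto improvement cycle. -/
theorem pjef_PO_iff_no_cycle
    (tpref : ι → α → α → Prop) (ppref : α → ι → ι → Prop)
    (httotal : ∀ i a b, tpref i a b ∨ tpref i b a)
    (httrans : ∀ i a b c, tpref i a b → tpref i b c → tpref i a c)
    (hptotal : ∀ p i j, ppref p i j ∨ ppref p j i)
    (hptrans : ∀ p i j l, ppref p i j → ppref p j l → ppref p i l)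
    (A : α → ι) (hA : PJEF tpref ppref A) :
    PO tpref ppref A ↔ ¬ ParetoImprovementCycle tpref ppref A := by
  classical
  have trefl : ∀ i a, tpref i a a := fun i a => (httotal i a a).elim id id
  have prefl : ∀ p i, ppref p i i := fun p i => (hptotal p i i).elim id id
  constructor
  · -- PO → no cycle
    intro hPO hcyc
    apply hPO
    obtain ⟨k, hk2, p, hpinj, hedge, t₀, ht₀, hstrict⟩ := hcyc
    have hkpos : 0 < k := by omega
    have hmodlt : ∀ t : ℕ, (t + 1) % k < k := fun t => Nat.mod_lt _ hkpos
    set σ : α → α := fun q =>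
      if h : ∃ t, t < k ∧ p t = q then p ((Classical.choose h + 1) % k) else q with hσdef
    have hσcyc : ∀ t, t < k → σ (p t) = p ((t + 1) % k) := by
      intro t ht
      have hex : ∃ s, s < k ∧ p s = p t := ⟨t, ht, rfl⟩
      have hs := Classical.choose_spec hex
      have hct : Classical.choose hex = t := hpinj _ _ hs.1 ht hs.2
      simp only [hσdef, dif_pos hex, hct]
    have hσfix : ∀ q, (¬ ∃ t, t < k ∧ p t = q) → σ q = q := by
      intro q h; simp only [hσdef, dif_neg h]
    have hσinj : Function.Injective σ := by
      intro a b hab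
      by_cases ha : ∃ t, t < k ∧ p t = a
      · obtain ⟨ta, hta, rfl⟩ := ha
        by_cases hb : ∃ t, t < k ∧ p t = b
        · obtain ⟨tb, htb, rfl⟩ := hb
          rw [hσcyc _ hta, hσcyc _ htb] at hab
          have h1 := hpinj _ _ (hmodlt ta) (hmodlt tb) hab
          rw [mod_succ_inj hta htb h1]
        · rw [hσcyc _ hta, hσfix b hb] at hab
          exact absurd ⟨_, hmodlt ta, hab⟩ hb
      · by_cases hb : ∃ t, t < k ∧ p t = b
        · obtain ⟨tb, htb, rfl⟩ := hb
          rw [hσfix a ha, hσcyc _ htb] at hab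
          exact absurd ⟨_, hmodlt tb, hab.symm⟩ ha
        · rwa [hσfix a ha, hσfix b hb] at hab
    have hteam : ∀ q, tpref (A (σ q)) q (σ q) := by
      intro q
      by_cases h : ∃ t, t < k ∧ p t = q
      · obtain ⟨t, ht, rfl⟩ := h
        rw [hσcyc _ ht]; exact (hedge t ht).2
      · rw [hσfix q h]; exact trefl _ _
    have hpart : ∀ q, ppref q (A (σ q)) (A q) := by
      intro q
      by_cases h : ∃ t, t < k ∧ p t = q
      · obtain ⟨t, ht, rfl⟩ := h
        rw [hσcyc _ ht]; exact (hedge t ht).1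
      · rw [hσfix q h]; exact prefl _ _
    have hbij : ∀ i, Set.BijOn σ ↑(bundle (fun q => A (σ q)) i) ↑(bundle A i) := by
      intro i
      refine ⟨?_, fun a _ b _ hab => hσinj hab, ?_⟩
      · intro q hq
        simp only [Finset.mem_coe, mem_bundle] at hq ⊢
        exact hq
      · intro q hq
        simp only [Finset.mem_coe, mem_bundle] at hq
        obtain ⟨q', rfl⟩ := Finite.injective_iff_surjective.mp hσinj q
        exact ⟨q', by simp only [Finset.mem_coe, mem_bundle]; exact hq, rfl⟩
    have hcard : ∀ i, (bundle (fun q => A (σ q)) i).card = (bundle A i).card := by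
      intro i
      exact Finset.card_bij (fun a _ => σ a)
        (fun a ha => Finset.mem_coe.mp ((hbij i).mapsTo (Finset.mem_coe.mpr ha)))
        (fun a _ b _ h => hσinj h)
        (fun b hb => by
          obtain ⟨a, ha, rfl⟩ := (hbij i).surjOn (Finset.mem_coe.mpr hb)
          exact ⟨a, Finset.mem_coe.mp ha, rfl⟩)
    refine ⟨fun q => A (σ q), hcard, ?_, hpart, ?_⟩
    · intro i
      exact ⟨bundle (fun q => A (σ q)) i, Finset.Subset.refl _, hcard i, σ, hbij i,
        fun q hq => by
          simp only [mem_bundle] at hq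
          exact hq ▸ hteam q⟩
    · rcases hstrict with ⟨h1, h2⟩ | ⟨h1, h2⟩
      · refine Or.inr ⟨p t₀, ?_⟩
        show ¬ppref (p t₀) (A (p t₀)) (A (σ (p t₀)))
        rw [hσcyc _ ht₀]; exact h2
      · refine Or.inl ⟨A (p ((t₀ + 1) % k)), ?_⟩
        intro hSD
        obtain ⟨Q', hQsub, hQcard, π, hπ, hπr⟩ := hSD
        set i := A (p ((t₀ + 1) % k)) with hi
        have hQ : Q' = bundle A i :=
          Finset.eq_of_subset_of_card_le hQsub (le_of_eq (hQcard.trans (hcard i)).symm)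
        subst hQ
        have hmaps : ∀ q ∈ (↑(bundle (fun q => A (σ q)) i) : Set α),
            π (σ q) ∈ (↑(bundle (fun q => A (σ q)) i) : Set α) :=
          fun q hq => hπ.mapsTo ((hbij i).mapsTo hq)
        have hinj2 : Set.InjOn (fun q => π (σ q)) ↑(bundle (fun q => A (σ q)) i) := by
          intro a ha b hb h
          exact hσinj (hπ.injOn ((hbij i).mapsTo ha) ((hbij i).mapsTo hb) h)
        have hr2 : ∀ q ∈ (↑(bundle (fun q => A (σ q)) i) : Set α), tpref i q (π (σ q)) := by
          intro q hq
          have hq0 := hq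
          rw [Finset.mem_coe] at hq0
          simp only [mem_bundle] at hq0
          have h1' : tpref i q (σ q) := hq0 ▸ hteam q
          have h2' : tpref i (σ q) (π (σ q)) := hπr _ (Finset.mem_coe.mp ((hbij i).mapsTo hq))
          exact httrans _ _ _ _ h1' h2'
        have hback := orbit_back (httrans i) (trefl i) hmaps hinj2 hr2
        have hpt₀ : p t₀ ∈ (↑(bundle (fun q => A (σ q)) i) : Set α) := by
          simp only [Finset.mem_coe, mem_bundle]
          rw [hσcyc _ ht₀, hi]
        have hb1 := hback _ hpt₀
        have hb2 : tpref i (σ (p t₀)) (π (σ (p t₀))) :=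
          hπr _ (Finset.mem_coe.mp ((hbij i).mapsTo hpt₀))
        have hfin : tpref i (σ (p t₀)) (p t₀) := httrans _ _ _ _ hb2 hb1
        rw [hσcyc _ ht₀] at hfin
        exact h2 hfin
  · -- no cycle → PO
    intro hnc hdom
    apply hnc
    obtain ⟨A', hcard, hSD, hpp, hstrict⟩ := hdom
    have hπex : ∀ i, ∃ π : α → α, Set.BijOn π ↑(bundle A' i) ↑(bundle A i) ∧
        ∀ q ∈ bundle A' i, tpref i q (π q) := by
      intro i
      obtain ⟨Q', hsub, hc, π, hb, hr⟩ := hSD i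
      have hQ : Q' = bundle A' i :=
        Finset.eq_of_subset_of_card_le hsub (le_of_eq (hc.trans (hcard i).symm).symm)
      subst hQ
      exact ⟨π, hb, hr⟩
    choose π hπb hπr using hπex
    set σ : α → α := fun q => π (A' q) q with hσdef
    have hmemA' : ∀ q, q ∈ bundle A' (A' q) := fun q => mem_bundle.mpr rfl
    have hσmem : ∀ q, A (σ q) = A' q := by
      intro q
      have h := (hπb (A' q)).mapsTo (Finset.mem_coe.mpr (hmemA' q))
      exact mem_bundle.mp (Finset.mem_coe.mp h)
    have hteam : ∀ q, tpref (A' q) q (σ q) := fun q => hπr (A' q) q (hmemA' q)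
    have hσinj : Function.Injective σ := by
      intro a b hab
      have hA' : A' a = A' b := by rw [← hσmem a, ← hσmem b, hab]
      have hab' : π (A' a) a = π (A' a) b := by
        conv_rhs => rw [hA']
        exact hab
      exact (hπb (A' a)).injOn (Finset.mem_coe.mpr (hmemA' a))
        (by rw [hA']; exact Finset.mem_coe.mpr (hmemA' b)) hab'
    have hσsurj : Function.Surjective σ := Finite.injective_iff_surjective.mp hσinj
    have hex : ∃ p₀, (ppref p₀ (A (σ p₀)) (A p₀) ∧ ¬ ppref p₀ (A p₀) (A (σ p₀))) ∨
        (tpref (A (σ p₀)) p₀ (σ p₀) ∧ ¬ tpref (A (σ p₀)) (σ p₀) p₀) := by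
      rcases hstrict with ⟨i, hi⟩ | ⟨q, hq⟩
      · by_contra hno
        apply hi
        have hw : ∀ q, tpref (A' q) (σ q) q := by
          intro q
          by_contra hcon
          exact hno ⟨q, Or.inr ⟨by rw [hσmem]; exact hteam q, by rw [hσmem]; exact hcon⟩⟩
        obtain ⟨ρ, hρ⟩ : ∃ ρ : α → α, ∀ q, σ (ρ q) = q :=
          ⟨fun q => (hσsurj q).choose, fun q => (hσsurj q).choose_spec⟩
        refine ⟨bundle A i, Finset.Subset.refl _, (hcard i).symm, ρ, ⟨?_, ?_, ?_⟩, ?_⟩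
        · intro q hq
          have hq' : A q = i := mem_bundle.mp (Finset.mem_coe.mp hq)
          have hA'' : A' (ρ q) = A (σ (ρ q)) := (hσmem (ρ q)).symm
          simp only [Finset.mem_coe, mem_bundle]
          rw [hA'', hρ q, hq']
        · intro a ha b hb h
          have h2 := congrArg σ h
          rwa [hρ a, hρ b] at h2
        · intro q hq
          have hq' : A' q = i := mem_bundle.mp (Finset.mem_coe.mp hq)
          refine ⟨σ q, ?_, ?_⟩
          · simp only [Finset.mem_coe, mem_bundle]
            rw [hσmem q, hq']
          · exact hσinj (hρ (σ q))
        · intro q hq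
          have hq' : A q = i := mem_bundle.mp hq
          have h1 := hw (ρ q)
          rw [hρ q] at h1
          have h2 : A' (ρ q) = i := by rw [← hσmem (ρ q), hρ q, hq']
          rwa [h2] at h1
      · exact ⟨q, Or.inl ⟨by rw [hσmem]; exact hpp q, by rw [hσmem]; exact hq⟩⟩
    obtain ⟨p₀, hp₀⟩ := hex
    have hne : σ p₀ ≠ p₀ := by
      intro h
      rcases hp₀ with ⟨h1, h2⟩ | ⟨h1, h2⟩
      · rw [h] at h2; exact h2 (prefl _ _)
      · rw [h] at h2; exact h2 (trefl _ _)
    obtain ⟨d, hd, hfix⟩ := exists_iterate_fixed (S := Set.univ)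
      (fun q _ => Set.mem_univ (σ q)) hσinj.injOn (Set.mem_univ p₀)
    have hper : Function.IsPeriodicPt σ d p₀ := hfix
    obtain ⟨k, hiterk, hk2, hinjk⟩ : ∃ k, σ^[k] p₀ = p₀ ∧ 2 ≤ k ∧
        ∀ t t', t < k → t' < k → σ^[t] p₀ = σ^[t'] p₀ → t = t' := by
      refine ⟨Function.minimalPeriod σ p₀, Function.iterate_minimalPeriod, ?_, ?_⟩
      · have hkpos : 0 < Function.minimalPeriod σ p₀ :=
          Function.IsPeriodicPt.minimalPeriod_pos hd hper
        rcases Nat.lt_or_ge 1 (Function.minimalPeriod σ p₀) with h | h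
        · omega
        · exfalso; apply hne
          have h1 : Function.minimalPeriod σ p₀ = 1 := by omega
          have h2 := Function.iterate_minimalPeriod (f := σ) (x := p₀)
          rw [h1] at h2; simpa using h2
      · intro t t' ht ht' h
        exact Function.iterate_injOn_Iio_minimalPeriod
          (Set.mem_Iio.mpr ht) (Set.mem_Iio.mpr ht') h
    have hstep : ∀ t, t < k → σ^[(t + 1) % k] p₀ = σ (σ^[t] p₀) := by
      intro t ht
      rcases Nat.lt_or_ge (t + 1) k with h | h
      · rw [Nat.mod_eq_of_lt h, Function.iterate_succ_apply']
      · have hk : t + 1 = k := by omega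
        have h2 : σ (σ^[t] p₀) = σ^[t + 1] p₀ := (Function.iterate_succ_apply' σ t p₀).symm
        rw [hk, Nat.mod_self, Function.iterate_zero_apply, h2, hk, hiterk]
    refine ⟨k, hk2, fun t => σ^[t] p₀, hinjk, ?_, 0, by omega, ?_⟩
    · intro t ht
      show ppref (σ^[t] p₀) (A (σ^[(t + 1) % k] p₀)) (A (σ^[t] p₀)) ∧
        tpref (A (σ^[(t + 1) % k] p₀)) (σ^[t] p₀) (σ^[(t + 1) % k] p₀)
      rw [hstep t ht, hσmem]
      exact ⟨hpp _, hteam _⟩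
    · have h1k : (0 + 1) % k = 1 := Nat.mod_eq_of_lt (by omega)
      simp only [h1k, Function.iterate_one, Function.iterate_zero_apply]
      exact hp₀

end Stmt16
end

section
/- When all participants are completely indifferent between all teams, the allocation returned by Algorithm 3 (the main algorithm) coincides with an output of the round-robin algorithm: team i receives the participants picked on its turns when teams pick most-preferred remaining participants in cyclic order. -/
/-- When all participants are indifferent between all teams, the matching computed by
the main algorithm coincides with an output of the round-robin algorithm.
Slots are indexed `0, …, m-1` in the order `1_1, 2_1, …, n_1, 1_2, 2_2, …`, so slot
`t` belongs to team `t % n`; `v t` is the value function of slot `t`, consistent with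
its team's preference (`hv`: slots of the same team have the same values).  If the
bijection `S` of slots to participants is lexicographically optimal for the slot
values over the complete bipartite eligibility, then `S` is a greedy round-robin
pick sequence: each slot `t`, in order, receives a participant most preferred by its
team among the participants not yet assigned to earlier slots. -/
theorem mainAlgo_indifferent_is_roundRobin {α : Type*} (n m : ℕ) (hn : 0 < n)
    (v : Fin m → α → ℝ)
    (hv : ∀ s t : Fin m, s.val % n = t.val % n → v s = v t)
    (S : Fin m ≃ α)
    (hlex : ∀ S' : Fin m ≃ α,
      ¬ ∃ t : Fin m, (∀ s : Fin m, s < t → v s (S' s) = v s (S s)) ∧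
        v t (S t) < v t (S' t)) :
    ∀ t : Fin m, ∀ q : α, (∀ s : Fin m, s < t → S s ≠ q) → v t q ≤ v t (S t) := by
  intro t q hq
  by_contra h
  push_neg at h
  obtain ⟨u, hu⟩ : ∃ u : Fin m, S u = q := ⟨S.symm q, S.apply_symm_apply q⟩
  have hut : ¬ u < t := fun hlt => hq u hlt hu
  have hne : u ≠ t := by
    rintro rfl
    rw [hu] at h
    exact lt_irrefl _ h
  exact hlex ((Equiv.swap t u).trans S)
    ⟨t, fun s hs => by
        rw [Equiv.trans_apply, Equiv.swap_apply_of_ne_of_ne (ne_of_lt hs)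
          (by rintro rfl; exact hut hs)],
      by simpa [Equiv.trans_apply, Equiv.swap_apply_left, hu] using h⟩
end

section
/- No mechanism for one-to-one two-sided matching with strict preferences can be both stable (participant-justified EF together with individual rationality and non-wastefulness) and strategyproof for both sides simultaneously: there exists an instance with 3 participants and 3 teams with strict preferences such that for every stable mechanism, some agent (participant or team) can strictly benefit by misreporting. -/
namespace Stmt18

/-- A strict preference list over three alternatives, given by its rank function:
`r a < r b` means `a` is strictly preferred to `b`. -/
abbrev Pref := Fin 3 ≃ Fin 3

/-- `a` is strictly preferred to `b` in the list `r`. -/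
def prefers (r : Pref) (a b : Fin 3) : Prop := r a < r b

/-- A mechanism `F` (mapping preference profiles of the 3 participants and 3 teams to
a matching) is stable if its output never admits a blocking pair. -/
def Stable (F : (Fin 3 → Pref) → (Fin 3 → Pref) → (Fin 3 ≃ Fin 3)) : Prop :=
  ∀ pp tp : Fin 3 → Pref, ¬ ∃ (p t : Fin 3),
    prefers (pp p) t (F pp tp p) ∧ prefers (tp t) p ((F pp tp).symm t)

instance (r : Pref) (a b : Fin 3) : Decidable (prefers r a b) :=
  inferInstanceAs (Decidable (r a < r b))

/-! Auxiliary permutations and the hard instance. -/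

def s01 : Pref := Equiv.swap 0 1
def s02 : Pref := Equiv.swap 0 2
def cyc : Pref := (Equiv.swap 1 2).trans (Equiv.swap 0 2)  -- 0↦2, 1↦0, 2↦1

def PP : Fin 3 → Pref := ![Equiv.refl _, s01, Equiv.refl _]
def TP : Fin 3 → Pref := ![cyc, s02, s01]
def PP' : Fin 3 → Pref := ![Equiv.refl _, cyc, Equiv.refl _]
def TP' : Fin 3 → Pref := ![s01, s02, s01]
def muA : Fin 3 ≃ Fin 3 := cyc
def muB : Fin 3 ≃ Fin 3 := s02

lemma key : ∀ M : Fin 3 ≃ Fin 3,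
    (¬ ∃ (p t : Fin 3), prefers (PP p) t (M p) ∧ prefers (TP t) p (M.symm t)) →
    M = muA ∨ M = muB := by decide

lemma keyP : ∀ M : Fin 3 ≃ Fin 3,
    (¬ ∃ (p t : Fin 3), prefers (PP' p) t (M p) ∧ prefers (TP t) p (M.symm t)) →
    M = muB := by decide

lemma keyT : ∀ M : Fin 3 ≃ Fin 3,
    (¬ ∃ (p t : Fin 3), prefers (PP p) t (M p) ∧ prefers (TP' t) p (M.symm t)) →
    M = muA := by decide

/-- Roth's impossibility: there is an instance with 3 participants and 3 teams with
strict preferences such that for every stable mechanism, some participant or some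
team can strictly benefit by misreporting its preference list. -/
theorem no_stable_and_strategyproof_both_sides :
    ∃ pp tp : Fin 3 → Pref,
      ∀ F : (Fin 3 → Pref) → (Fin 3 → Pref) → (Fin 3 ≃ Fin 3), Stable F →
        (∃ (p : Fin 3) (pp' : Fin 3 → Pref), (∀ q : Fin 3, q ≠ p → pp' q = pp q) ∧
          prefers (pp p) (F pp' tp p) (F pp tp p)) ∨
        (∃ (t : Fin 3) (tp' : Fin 3 → Pref), (∀ s : Fin 3, s ≠ t → tp' s = tp s) ∧
          prefers (tp t) ((F pp tp').symm t) ((F pp tp).symm t)) := by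
  refine ⟨PP, TP, ?_⟩
  intro F hF
  have hAB := key (F PP TP) (hF PP TP)
  rcases hAB with hA | hB
  · left
    refine ⟨1, PP', ?_, ?_⟩
    · decide
    · have hB' := keyP (F PP' TP) (hF PP' TP)
      rw [hA, hB']
      decide
  · right
    refine ⟨0, TP', ?_, ?_⟩
    · decide
    · have hA' := keyT (F PP TP') (hF PP TP')
      rw [hB, hA']
      decide

end Stmt18
end
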